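/- The function β(c) = 2(2+c)·arcosh(c/2+1) - 2·√(c²+4c) satisfies β(0) = 0 and β(c) > 0 for all c > 0. -/

import Mathlib

noncomputable def arcosh (x : ℝ) : ℝ := Real.log (x + Real.sqrt (x^2 - 1))

noncomputable def β (c : ℝ) : ℝ :=
  2*(2+c) * arcosh (c/2 + 1) - 2 * Real.sqrt (c^2 + 4*c)

open Real in
lemma sinh_lt_mul_cosh {t : ℝ} (ht : 0 < t) : Real.sinh t < t * Real.cosh t := by
  have h : StrictMonoOn (fun x => x * Real.cosh x - Real.sinh x) (Set.Ici 0) := by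
    refine strictMonoOn_of_deriv_pos (convex_Ici _) ?_ fun x hx => ?_
    · exact ((continuous_id.mul continuous_cosh).sub continuous_sinh).continuousOn
    · rw [interior_Ici, Set.mem_Ioi] at hx
      have : deriv (fun x => x * Real.cosh x - Real.sinh x) x = x * Real.sinh x := by
        rw [deriv_fun_sub ((differentiableAt_fun_id.fun_mul (Real.differentiable_cosh x)))
          (Real.differentiable_sinh x), deriv_fun_mul differentiableAt_fun_id
          (Real.differentiable_cosh x)]
        simp
      rw [this]
      exact mul_pos hx (Real.sinh_pos_iff.2 hx)
  have := h (Set.self_mem_Ici) (Set.mem_Ici.2 ht.le) ht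
  simpa using this

theorem beta_zero_and_pos : β 0 = 0 ∧ ∀ c : ℝ, 0 < c → 0 < β c := by
  constructor
  · simp [β, arcosh]
  · intro c hc
    set x : ℝ := c/2 + 1 with hx
    have hx1 : 1 < x := by simp [hx]; linarith
    have hs2 : x^2 - 1 = (c^2 + 4*c)/4 := by rw [hx]; ring
    set s : ℝ := Real.sqrt (x^2 - 1) with hs
    have hsnn : 0 ≤ s := Real.sqrt_nonneg _
    have hspos : 0 < s := Real.sqrt_pos.2 (by nlinarith)
    have hssq : s^2 = x^2 - 1 := Real.sq_sqrt (by nlinarith)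
    have hsc : Real.sqrt (c^2 + 4*c) = 2 * s := by
      have h1 : c^2 + 4*c = (2*s)^2 := by
        rw [mul_pow, hssq, hs2]; ring
      rw [h1, Real.sqrt_sq (by positivity)]
    set y : ℝ := x + s with hy
    have hy1 : 1 < y := by rw [hy]; linarith
    have hypos : 0 < y := by linarith
    have hinv : y⁻¹ = x - s := by
      have hmul : y * (x - s) = 1 := by rw [hy]; nlinarith
      exact inv_eq_of_mul_eq_one_right hmul
    set t : ℝ := Real.log y with hty
    have htpos : 0 < t := Real.log_pos hy1
    have hexp : Real.exp t = y := Real.exp_log hypos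
    have hexpn : Real.exp (-t) = x - s := by
      rw [Real.exp_neg, hexp, hinv]
    have hcosh : Real.cosh t = x := by
      rw [Real.cosh_eq, hexp, hexpn]; ring
    have hsinh : Real.sinh t = s := by
      rw [Real.sinh_eq, hexp, hexpn]; ring
    have key : s < t * x := by
      rw [← hsinh, ← hcosh]; exact sinh_lt_mul_cosh htpos
    have hb : β c = 4*(t*x) - 4*s := by
      rw [β, arcosh, hsc, ← hx, ← hs, ← hy, ← hty]; ring
    rw [hb]; linarith
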